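/- arXiv:1606.02340 — 8 statements merged into one kernel-verified Lean document; each statement's English description precedes it below -/
import Mathlib

section
/- Let G be the GP graph constructed from a finite simple graph H with vertex set {v_1,…,v_n}. Then the set V(H) ∪ {z_1,…,z_n} is a restrained dominating set of G, and the restrained domination number of G equals 2n. -/
/-- A set `D` is a restrained dominating set of `G` if every vertex not in `D`
is adjacent to a vertex in `D` and to a vertex outside `D`. -/
def IsRestrainedDominatingSet {V : Type*} (G : SimpleGraph V) (D : Finset V) : Prop :=
  (∀ v, v ∉ D → ∃ u ∈ D, G.Adj v u) ∧ (∀ v, v ∉ D → ∃ u, u ∉ D ∧ G.Adj v u)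

/-- The restrained domination number: minimum cardinality of a restrained dominating set. -/
noncomputable def restrainedDominationNumber {V : Type*} [Fintype V] (G : SimpleGraph V) : ℕ :=
  sInf {n | ∃ D : Finset V, IsRestrainedDominatingSet G D ∧ D.card = n}

/-- The GP graph of `H`: for each vertex `v` of `H`, attach a pendant path
`v, x_v, y_v, z_v` of length 3, where `x_v = (v,0)`, `y_v = (v,1)`, `z_v = (v,2)`. -/
def GPGraph {V : Type*} (H : SimpleGraph V) : SimpleGraph (V ⊕ V × Fin 3) :=
  SimpleGraph.fromRel (fun a b =>
    match a, b with
    | Sum.inl u, Sum.inl v => H.Adj u v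
    | Sum.inl u, Sum.inr (v, i) => u = v ∧ i = 0
    | Sum.inr (u, i), Sum.inr (v, j) => u = v ∧ ((i = 0 ∧ j = 1) ∨ (i = 1 ∧ j = 2))
    | _, _ => False)

section
variable {V : Type*} (H : SimpleGraph V)

lemma adj01 (v : V) : (GPGraph H).Adj (Sum.inr (v,0)) (Sum.inr (v,1)) := by
  simp [GPGraph, SimpleGraph.fromRel_adj]

lemma adj12 (v : V) : (GPGraph H).Adj (Sum.inr (v,1)) (Sum.inr (v,2)) := by
  simp [GPGraph, SimpleGraph.fromRel_adj]

lemma adjv0 (v : V) : (GPGraph H).Adj (Sum.inl v) (Sum.inr (v,0)) := by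
  simp [GPGraph, SimpleGraph.fromRel_adj]

lemma adj2_eq (v : V) (w : V ⊕ V × Fin 3) :
    (GPGraph H).Adj (Sum.inr (v, 2)) w → w = Sum.inr (v, 1) := by
  rcases w with u | ⟨u, i⟩ <;>
    simp only [GPGraph, SimpleGraph.fromRel_adj] <;>
    rintro ⟨hne, h | h⟩ <;> simp_all

lemma adj1_eq (v : V) (w : V ⊕ V × Fin 3) :
    (GPGraph H).Adj (Sum.inr (v, 1)) w → w = Sum.inr (v, 0) ∨ w = Sum.inr (v, 2) := by
  rcases w with u | ⟨u, i⟩ <;>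
    simp only [GPGraph, SimpleGraph.fromRel_adj] <;>
    rintro ⟨hne, h | h⟩ <;> simp_all

lemma adj0_eq (v : V) (w : V ⊕ V × Fin 3) :
    (GPGraph H).Adj (Sum.inr (v, 0)) w → w = Sum.inl v ∨ w = Sum.inr (v, 1) := by
  rcases w with u | ⟨u, i⟩ <;>
    simp only [GPGraph, SimpleGraph.fromRel_adj] <;>
    rintro ⟨hne, h | h⟩ <;> simp_all

lemma key [DecidableEq V] (D : Finset (V ⊕ V × Fin 3))
    (hD : IsRestrainedDominatingSet (GPGraph H) D) (v : V) :
    Sum.inr (v, (2:Fin 3)) ∈ D ∧ (Sum.inr (v, (1:Fin 3)) ∈ D ∨ Sum.inl v ∈ D) := by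
  have hz : Sum.inr (v, (2:Fin 3)) ∈ D := by
    by_contra hz
    obtain ⟨u, hu, hadj⟩ := hD.1 _ hz
    obtain ⟨u', hu', hadj'⟩ := hD.2 _ hz
    rw [adj2_eq H v u hadj] at hu
    rw [adj2_eq H v u' hadj'] at hu'
    exact hu' hu
  refine ⟨hz, ?_⟩
  by_contra hy
  push_neg at hy
  obtain ⟨hy1, hyl⟩ := hy
  -- y ∉ D; its neighbor outside D must be (v,0)
  obtain ⟨u', hu', hadj'⟩ := hD.2 _ hy1
  rcases adj1_eq H v u' hadj' with h | h
  · subst h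
    -- x = (v,0) ∉ D, its neighbor in D must be inl v or (v,1), both not in D
    obtain ⟨w, hw, hadjw⟩ := hD.1 _ hu'
    rcases adj0_eq H v w hadjw with h | h <;> subst h
    · exact hyl hw
    · exact hy1 hw
  · subst h; exact hu' hz

end

/-- For the GP graph `G` of `H` on `n` vertices, `V(H) ∪ {z_1,…,z_n}` is a
restrained dominating set of `G` and `γ_r(G) = 2n`. -/
theorem stmt_1 {V : Type*} [Fintype V] [DecidableEq V] (H : SimpleGraph V)
    (n : ℕ) (hn : n = Fintype.card V) :
    IsRestrainedDominatingSet (GPGraph H)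
      ((Finset.univ.image (Sum.inl : V → V ⊕ V × Fin 3)) ∪
        (Finset.univ.image (fun v : V => (Sum.inr (v, (2 : Fin 3)) : V ⊕ V × Fin 3)))) ∧
    restrainedDominationNumber (GPGraph H) = 2 * n := by
  set D₀ : Finset (V ⊕ V × Fin 3) :=
    (Finset.univ.image (Sum.inl : V → V ⊕ V × Fin 3)) ∪
      (Finset.univ.image (fun v : V => (Sum.inr (v, (2 : Fin 3)) : V ⊕ V × Fin 3))) with hD₀
  have hmem : ∀ w : V ⊕ V × Fin 3, w ∈ D₀ ↔ (∃ u, w = Sum.inl u) ∨ ∃ u, w = Sum.inr (u, 2) := by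
    intro w
    simp [hD₀, eq_comm]
  have hrds : IsRestrainedDominatingSet (GPGraph H) D₀ := by
    constructor <;> intro w hw
    · rcases w with u | ⟨u, i⟩
      · exact absurd ((hmem _).2 (Or.inl ⟨u, rfl⟩)) hw
      · fin_cases i
        · exact ⟨Sum.inl u, (hmem _).2 (Or.inl ⟨u, rfl⟩), ((adjv0 H u).symm)⟩
        · exact ⟨Sum.inr (u, 2), (hmem _).2 (Or.inr ⟨u, rfl⟩), adj12 H u⟩
        · exact absurd ((hmem _).2 (Or.inr ⟨u, rfl⟩)) hw
    · rcases w with u | ⟨u, i⟩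
      · exact absurd ((hmem _).2 (Or.inl ⟨u, rfl⟩)) hw
      · fin_cases i
        · refine ⟨Sum.inr (u, 1), ?_, adj01 H u⟩
          rw [hmem]; rintro (⟨_, h⟩ | ⟨_, h⟩) <;> simp_all
        · refine ⟨Sum.inr (u, 0), ?_, (adj01 H u).symm⟩
          rw [hmem]; rintro (⟨_, h⟩ | ⟨_, h⟩) <;> simp_all
        · exact absurd ((hmem _).2 (Or.inr ⟨u, rfl⟩)) hw
  have hcard : D₀.card = 2 * n := by
    rw [hD₀, Finset.card_union_of_disjoint, Finset.card_image_of_injective _ Sum.inl_injective,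
      Finset.card_image_of_injective, Finset.card_univ, ← hn]
    · ring
    · intro a b hab; simpa using hab
    · rw [Finset.disjoint_left]; rintro w hw hw'
      simp only [Finset.mem_image] at hw hw'
      obtain ⟨a, -, rfl⟩ := hw
      obtain ⟨b, -, h⟩ := hw'
      exact absurd h (by simp)
  have hmem2 : 2 * n ∈ {m | ∃ D : Finset (V ⊕ V × Fin 3),
      IsRestrainedDominatingSet (GPGraph H) D ∧ D.card = m} := ⟨D₀, hrds, hcard⟩
  refine ⟨hrds, le_antisymm (Nat.sInf_le hmem2) ?_⟩
  apply le_csInf ⟨2 * n, hmem2⟩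
  rintro m ⟨D, hD, rfl⟩
  classical
  set f : V → V ⊕ V × Fin 3 := fun v => if Sum.inr (v, (1:Fin 3)) ∈ D then Sum.inr (v, 1) else Sum.inl v with hf
  have hfD : ∀ v, f v ∈ D := by
    intro v
    rw [hf]; dsimp only
    split_ifs with h
    · exact h
    · exact (key H D hD v).2.resolve_left h
  have hS : (Finset.univ.image (fun v : V => (Sum.inr (v, (2:Fin 3)) : V ⊕ V × Fin 3)))
      ∪ Finset.univ.image f ⊆ D := by
    intro w hw
    simp only [Finset.mem_union, Finset.mem_image] at hw
    rcases hw with ⟨a, -, rfl⟩ | ⟨a, -, rfl⟩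
    · exact (key H D hD a).1
    · exact hfD a
  have hfinj : Function.Injective f := by
    intro a b hab
    rw [hf] at hab; dsimp only at hab
    split_ifs at hab <;> simp_all
  have hcard2 : ((Finset.univ.image (fun v : V => (Sum.inr (v, (2:Fin 3)) : V ⊕ V × Fin 3)))
      ∪ Finset.univ.image f).card = 2 * n := by
    rw [Finset.card_union_of_disjoint, Finset.card_image_of_injective _ hfinj,
      Finset.card_image_of_injective, Finset.card_univ, ← hn]
    · ring
    · intro a b hab; simpa using hab
    · rw [Finset.disjoint_left]; rintro w hw hw'
      simp only [Finset.mem_image] at hw hw'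
      obtain ⟨a, -, rfl⟩ := hw
      obtain ⟨b, -, h⟩ := hw'
      rw [hf] at h; dsimp only at h
      split_ifs at h <;> simp_all
  calc 2 * n = _ := hcard2.symm
    _ ≤ D.card := Finset.card_le_card hS
end

section
/- Let G be the GP graph constructed from a finite simple graph H with vertex set {v_1,…,v_n}, and let k be a natural number. Then H has a dominating set of cardinality at most k if and only if G has a dominating set of cardinality at most n + k. -/
/-- A set `D` is a dominating set of `G` if every vertex not in `D`
is adjacent to a vertex in `D`. -/
def IsDominatingSet {V : Type*} (G : SimpleGraph V) (D : Finset V) : Prop :=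
  ∀ v, v ∉ D → ∃ u ∈ D, G.Adj v u

lemma gp_adj_inl_inl {V : Type*} (H : SimpleGraph V) (u v : V) :
    (GPGraph H).Adj (Sum.inl u) (Sum.inl v) ↔ H.Adj u v := by
  constructor
  · rintro ⟨hne, h | h⟩
    · exact h
    · exact h.symm
  · intro h
    exact ⟨by simpa using h.ne, Or.inl h⟩

lemma gp_adj_inl_x {V : Type*} (H : SimpleGraph V) (v : V) :
    (GPGraph H).Adj (Sum.inl v) (Sum.inr (v, 0)) := by
  exact ⟨by simp, Or.inl ⟨rfl, rfl⟩⟩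

lemma gp_adj_x_y {V : Type*} (H : SimpleGraph V) (v : V) :
    (GPGraph H).Adj (Sum.inr (v, 0)) (Sum.inr (v, 1)) := by
  exact ⟨by simp, Or.inl ⟨rfl, Or.inl ⟨rfl, rfl⟩⟩⟩

lemma gp_adj_z_y {V : Type*} (H : SimpleGraph V) (v : V) :
    (GPGraph H).Adj (Sum.inr (v, 2)) (Sum.inr (v, 1)) := by
  exact ⟨by simp, Or.inr ⟨rfl, Or.inr ⟨rfl, rfl⟩⟩⟩

/-- `H` has a dominating set of cardinality at most `k` iff its GP graph has a
dominating set of cardinality at most `n + k`, where `n` is the number of vertices of `H`. -/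
theorem stmt_2 {V : Type*} [Fintype V] [DecidableEq V] (H : SimpleGraph V)
    (n : ℕ) (hn : n = Fintype.card V) (k : ℕ) :
    (∃ D : Finset V, IsDominatingSet H D ∧ D.card ≤ k) ↔
      (∃ D' : Finset (V ⊕ V × Fin 3), IsDominatingSet (GPGraph H) D' ∧ D'.card ≤ n + k) := by
  classical
  constructor
  · rintro ⟨D, hD, hcard⟩
    refine ⟨D.image Sum.inl ∪ Finset.univ.image (fun v => Sum.inr (v, (1 : Fin 3))), ?_, ?_⟩
    · intro w hw
      simp only [Finset.mem_union, Finset.mem_image, Finset.mem_univ, true_and,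
        not_or, not_exists, not_and] at hw
      obtain ⟨hw1, hw2⟩ := hw
      match w with
      | Sum.inl v =>
          have hv : v ∉ D := fun h => hw1 v h rfl
          obtain ⟨u, hu, hadj⟩ := hD v hv
          exact ⟨Sum.inl u, Finset.mem_union.2 (Or.inl (Finset.mem_image_of_mem _ hu)),
            (gp_adj_inl_inl H v u).2 hadj⟩
      | Sum.inr (v, 0) =>
          exact ⟨Sum.inr (v, 1), by simp, gp_adj_x_y H v⟩
      | Sum.inr (v, 1) =>
          exact absurd rfl (hw2 v)
      | Sum.inr (v, 2) =>
          exact ⟨Sum.inr (v, 1), by simp, gp_adj_z_y H v⟩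
    · calc (D.image Sum.inl ∪ Finset.univ.image (fun v => Sum.inr (v, (1 : Fin 3)))).card
          ≤ (D.image Sum.inl).card + (Finset.univ.image (fun v : V => Sum.inr (v, (1 : Fin 3)))).card :=
            Finset.card_union_le _ _
        _ ≤ D.card + Fintype.card V := by
            gcongr
            · exact Finset.card_image_le
            · exact le_of_eq (by
                rw [Finset.card_image_of_injective _ (fun a b h => by simpa using h)]
                simp)
        _ ≤ n + k := by omega
  · rintro ⟨D', hD', hc⟩
    have key : ∀ v : V, Sum.inr (v, (1 : Fin 3)) ∈ D' ∨ Sum.inr (v, (2 : Fin 3)) ∈ D' := by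
      intro v
      by_cases h2 : Sum.inr (v, (2 : Fin 3)) ∈ D'
      · exact Or.inr h2
      · obtain ⟨u, hu, hadj⟩ := hD' _ h2
        left
        have : u = Sum.inr (v, (1 : Fin 3)) := by
          obtain ⟨-, h | h⟩ := hadj
          · rcases u with u | ⟨w, j⟩
            · exact absurd h (by simp [GPGraph])
            · obtain ⟨rfl, h⟩ := h
              rcases h with ⟨h, -⟩ | ⟨h, -⟩ <;> exact absurd h (by decide)
          · rcases u with u | ⟨w, j⟩
            · exact absurd h.2 (by decide)
            · obtain ⟨rfl, h⟩ := h
              rcases h with ⟨-, h⟩ | ⟨h, -⟩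
              · exact absurd h (by decide)
              · rw [h]
        rw [← this]; exact hu
    set D : Finset V := Finset.univ.filter
      (fun v => Sum.inl v ∈ D' ∨ Sum.inr (v, (0 : Fin 3)) ∈ D') with hDdef
    refine ⟨D, ?_, ?_⟩
    · intro v hv
      simp only [hDdef, Finset.mem_filter, Finset.mem_univ, true_and, not_or] at hv
      obtain ⟨hv1, hv2⟩ := hv
      obtain ⟨u, hu, hadj⟩ := hD' (Sum.inl v) hv1
      rcases u with u | ⟨w, j⟩
      · refine ⟨u, ?_, (gp_adj_inl_inl H v u).1 hadj⟩
        simp only [hDdef, Finset.mem_filter, Finset.mem_univ, true_and]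
        exact Or.inl hu
      · exfalso
        obtain ⟨-, h | h⟩ := hadj
        · obtain ⟨rfl, rfl⟩ := h
          exact hv2 hu
        · exact h
    · -- cardinality
      set f : V → V ⊕ V × Fin 3 := fun v =>
        if Sum.inl v ∈ D' then Sum.inl v else Sum.inr (v, (0 : Fin 3)) with hf
      set g : V → V ⊕ V × Fin 3 := fun v =>
        if Sum.inr (v, (1 : Fin 3)) ∈ D' then Sum.inr (v, (1 : Fin 3))
          else Sum.inr (v, (2 : Fin 3)) with hg
      have hfD : ∀ v ∈ D, f v ∈ D' := by
        intro v hv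
        simp only [hDdef, Finset.mem_filter, Finset.mem_univ, true_and] at hv
        by_cases h : Sum.inl v ∈ D'
        · simp [hf, h]
        · simp only [hf, h, if_neg, if_false]
          exact hv.resolve_left h
      have hgD : ∀ v : V, g v ∈ D' := by
        intro v
        by_cases h : Sum.inr (v, (1 : Fin 3)) ∈ D'
        · simp [hg, h]
        · simp only [hg, h, if_false]
          exact (key v).resolve_left h
      have hsub : D.image f ∪ Finset.univ.image g ⊆ D' := by
        intro w hw
        rcases Finset.mem_union.1 hw with h | h
        · obtain ⟨v, hv, rfl⟩ := Finset.mem_image.1 h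
          exact hfD v hv
        · obtain ⟨v, -, rfl⟩ := Finset.mem_image.1 h
          exact hgD v
      have hdisj : Disjoint (D.image f) (Finset.univ.image g) := by
        rw [Finset.disjoint_left]
        intro w hw hw'
        obtain ⟨v, -, rfl⟩ := Finset.mem_image.1 hw
        obtain ⟨v', -, hv'⟩ := Finset.mem_image.1 hw'
        by_cases h : Sum.inl v ∈ D' <;>
          by_cases h' : Sum.inr (v', (1 : Fin 3)) ∈ D' <;>
            simp only [hf, hg, h, h', if_true, if_false] at hv' <;>
              exact absurd hv' (by simp)
      have hfinj : Function.Injective f := by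
        intro a b hab
        by_cases ha : Sum.inl a ∈ D' <;> by_cases hb : Sum.inl b ∈ D' <;>
          simp only [hf, ha, hb, if_true, if_false] at hab <;>
            first
            | exact Sum.inl.inj hab
            | exact (Prod.ext_iff.1 (Sum.inr.inj hab)).1
            | exact absurd hab (by simp)
      have hginj : Function.Injective g := by
        intro a b hab
        by_cases ha : Sum.inr (a, (1 : Fin 3)) ∈ D' <;>
          by_cases hb : Sum.inr (b, (1 : Fin 3)) ∈ D' <;>
            simp only [hg, ha, hb, if_true, if_false] at hab <;>
              have h := Sum.inr.inj hab
        · exact (Prod.ext_iff.1 h).1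
        · exact absurd (congrArg Prod.snd h) (by simp)
        · exact absurd (congrArg Prod.snd h) (by simp)
        · exact (Prod.ext_iff.1 h).1
      have hcards : D.card + n ≤ D'.card := by
        have h1 : (D.image f).card = D.card := Finset.card_image_of_injective _ hfinj
        have h2 : (Finset.univ.image g).card = Fintype.card V :=
          by rw [Finset.card_image_of_injective _ hginj]; simp
        have := Finset.card_le_card hsub
        rw [Finset.card_union_of_disjoint hdisj, h1, h2] at this
        omega
      omega
end

section
/- Let G be a connected threshold graph with at least three vertices, with split partition (C,I) and clique ordering x_1,…,x_p as in the threshold characterization. If p > 1 and N[x_p] = N[x_{p-1}], then {x_p} is a minimum restrained dominating set of G; in particular, the restrained domination number of G equals 1. -/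
/-- For a connected threshold graph `G` with at least three vertices, split partition `(C, I)`
and clique ordering `x_1, …, x_p` with nested closed neighborhoods, if `p > 1` and
`N[x_p] = N[x_{p-1}]`, then `{x_p}` is a minimum restrained dominating set and `γ_r(G) = 1`. -/
theorem stmt_4 {V : Type*} [Fintype V] [DecidableEq V] (G : SimpleGraph V)
    (hconn : G.Connected) (hcard : 3 ≤ Fintype.card V)
    (C I : Finset V) (hdisj : Disjoint C I) (hunion : C ∪ I = Finset.univ)
    (hclique : G.IsClique (C : Set V))
    (hindep : ∀ u ∈ I, ∀ v ∈ I, ¬ G.Adj u v)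
    (p : ℕ) (x : Fin p → V) (hxinj : Function.Injective x)
    (hxim : Finset.univ.image x = C)
    (hchain : ∀ i j : Fin p, i ≤ j →
      insert (x i) (G.neighborSet (x i)) ⊆ insert (x j) (G.neighborSet (x j)))
    (hp : 1 < p)
    (heq : insert (x ⟨p - 1, by omega⟩) (G.neighborSet (x ⟨p - 1, by omega⟩)) =
      insert (x ⟨p - 2, by omega⟩) (G.neighborSet (x ⟨p - 2, by omega⟩))) :
    IsRestrainedDominatingSet G {x ⟨p - 1, by omega⟩} ∧
    restrainedDominationNumber G = 1 := by
  have hplt : p - 1 < p := by omega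
  have hplt2 : p - 2 < p := by omega
  set xp := x ⟨p - 1, hplt⟩ with hxp
  set xq := x ⟨p - 2, hplt2⟩ with hxq
  have hne : xq ≠ xp := by
    intro h
    have := hxinj h
    simp only [Fin.mk.injEq] at this
    omega
  have hxpC : xp ∈ C := by
    rw [← hxim]; exact Finset.mem_image_of_mem x (Finset.mem_univ _)
  -- every vertex ≠ xp is adjacent to xp
  have hadj : ∀ v : V, v ≠ xp → G.Adj v xp := by
    intro v hv
    have hvmem : v ∈ C ∪ I := by rw [hunion]; exact Finset.mem_univ v
    rcases Finset.mem_union.mp hvmem with hC | hI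
    · exact hclique hC hxpC hv
    · -- v has a neighbor since G is connected and card ≥ 2
      obtain ⟨w, hw⟩ : ∃ w, G.Adj v w := by
        have : ∃ w : V, w ≠ v := by
          by_contra h
          push_neg at h
          have : Fintype.card V ≤ 1 := Fintype.card_le_one_iff.mpr (fun a b => (h a).trans (h b).symm)
          omega
        obtain ⟨w, hwv⟩ := this
        obtain ⟨walk⟩ := hconn.preconnected v w
        cases walk with
        | nil => exact absurd rfl hwv.symm
        | cons h _ => exact ⟨_, h⟩
      have hwC : w ∈ C := by
        have hwmem : w ∈ C ∪ I := by rw [hunion]; exact Finset.mem_univ w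
        rcases Finset.mem_union.mp hwmem with h | h
        · exact h
        · exact absurd hw (hindep v hI w h)
      rw [← hxim] at hwC
      obtain ⟨i, _, hi⟩ := Finset.mem_image.mp hwC
      have hvN : v ∈ insert (x i) (G.neighborSet (x i)) := by
        right
        rw [SimpleGraph.mem_neighborSet, hi]
        exact hw.symm
      have hile : i ≤ ⟨p - 1, hplt⟩ := by
        rw [Fin.le_def]
        exact Nat.le_pred_of_lt i.isLt
      have := hchain i ⟨p - 1, hplt⟩ hile hvN
      rcases this with h | h
      · exact absurd h hv
      · exact h.symm
  have hdom : IsRestrainedDominatingSet G {xp} := by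
    constructor
    · intro v hv
      simp only [Finset.mem_singleton] at hv
      exact ⟨xp, Finset.mem_singleton_self _, hadj v hv⟩
    · intro v hv
      simp only [Finset.mem_singleton] at hv
      have hvN : v ∈ insert xq (G.neighborSet xq) := by
        rw [← heq]
        right
        exact (hadj v hv).symm
      rcases hvN with h | h
      · -- v = xq : find a third vertex
        have hss : ({xp, xq} : Finset V) ⊂ Finset.univ := by
          apply Finset.ssubset_univ_iff.mpr
          intro habs
          have hle := Finset.card_le_card habs.ge
          have h2 : ({xp, xq} : Finset V).card ≤ 2 :=
            (Finset.card_insert_le _ _).trans (by simp)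
          rw [Finset.card_univ] at hle
          omega
        obtain ⟨w, _, hw⟩ := Finset.exists_of_ssubset hss
        simp only [Finset.mem_insert, Finset.mem_singleton, not_or] at hw
        refine ⟨w, by simpa using hw.1, ?_⟩
        have hwN : w ∈ insert xq (G.neighborSet xq) := by
          rw [← heq]
          right
          exact (hadj w hw.1).symm
        rcases hwN with h' | h'
        · exact absurd h' hw.2
        · rw [h]; exact h'
      · exact ⟨xq, by simpa using hne, h.symm⟩
  refine ⟨hdom, ?_⟩
  have h1 : 1 ∈ {n | ∃ D : Finset V, IsRestrainedDominatingSet G D ∧ D.card = n} :=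
    ⟨{xp}, hdom, Finset.card_singleton _⟩
  apply le_antisymm
  · exact Nat.sInf_le h1
  · apply le_csInf ⟨1, h1⟩
    rintro n ⟨D, hD, rfl⟩
    by_contra h
    have hD0 : D = ∅ := Finset.card_eq_zero.mp (by omega)
    subst hD0
    obtain ⟨u, hu, _⟩ := hD.1 xp (Finset.notMem_empty _)
    exact Finset.notMem_empty u hu
end

section
/- Let G be a connected chain graph with at least three vertices. If every non-pendant vertex of G is adjacent to a pendant vertex as well as to a non-pendant vertex, then G is a bi-star. -/
/-- `G` is a bi-star: a tree with exactly two non-pendant vertices, which are adjacent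
to each other, and every other vertex is a pendant vertex adjacent to one of them. -/
def IsBiStar {V : Type*} [Fintype V] [DecidableEq V] (G : SimpleGraph V)
    [DecidableRel G.Adj] : Prop :=
  ∃ u w, G.Adj u w ∧ G.degree u ≠ 1 ∧ G.degree w ≠ 1 ∧
    ∀ v, v ≠ u → v ≠ w → G.degree v = 1 ∧ (G.Adj v u ∨ G.Adj v w)

lemma two_adj_deg_ne_one {V : Type*} [Fintype V] [DecidableEq V] {G : SimpleGraph V}
    [DecidableRel G.Adj] {a v u : V} (h1 : G.Adj a v) (h2 : G.Adj a u) (hne : v ≠ u) :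
    G.degree a ≠ 1 := by
  intro h
  have hsub : ({v, u} : Finset V) ⊆ G.neighborFinset a := by
    intro z hz
    rcases Finset.mem_insert.mp hz with rfl | hz
    · simpa using h1
    · simp only [Finset.mem_singleton] at hz
      subst hz
      simpa using h2
  have h2' := Finset.card_le_card hsub
  rw [Finset.card_pair hne] at h2'
  have hdef : G.degree a = (G.neighborFinset a).card := rfl
  omega

/-- Let `G` be a connected chain graph with at least three vertices. If every non-pendant
vertex of `G` is adjacent to a pendant vertex as well as to a non-pendant vertex,
then `G` is a bi-star. -/
theorem stmt_10 {V : Type*} [Fintype V] [DecidableEq V] (G : SimpleGraph V)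
    [DecidableRel G.Adj] (hconn : G.Connected) (hcard : 3 ≤ Fintype.card V)
    (X Y : Finset V) (hdisj : Disjoint X Y) (hunion : X ∪ Y = Finset.univ)
    (hbip : ∀ u v, G.Adj u v → (u ∈ X ∧ v ∈ Y) ∨ (u ∈ Y ∧ v ∈ X))
    (p : ℕ) (x : Fin p → V) (hxinj : Function.Injective x)
    (hxim : Finset.univ.image x = X)
    (hxchain : ∀ i j : Fin p, i ≤ j → G.neighborSet (x i) ⊆ G.neighborSet (x j))
    (hyp : ∀ v, G.degree v ≠ 1 →
      (∃ a, G.degree a = 1 ∧ G.Adj v a) ∧ (∃ b, G.degree b ≠ 1 ∧ G.Adj v b)) :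
    IsBiStar G := by
  classical
  have hadj : ∀ v : V, ∃ a, G.Adj v a := by
    intro v
    obtain ⟨a, ha⟩ := Fintype.exists_ne_of_one_lt_card (by omega) v
    obtain ⟨wlk⟩ := hconn.preconnected v a
    cases wlk with
    | nil => exact absurd rfl ha
    | cons h _ => exact ⟨_, h⟩
  have memX : ∀ z ∈ X, ∃ i, x i = z := by
    intro z hz
    rw [← hxim] at hz
    simpa using hz
  have hXY : ∀ {u v : V}, G.Adj u v → u ∈ X → v ∈ Y := by
    intro u v h hu
    rcases hbip u v h with ⟨_, hv⟩ | ⟨hu', _⟩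
    · exact hv
    · exact (Finset.disjoint_left.mp hdisj hu hu').elim
  have hYX : ∀ {u v : V}, G.Adj u v → u ∈ Y → v ∈ X := by
    intro u v h hu
    rcases hbip u v h with ⟨hu', _⟩ | ⟨_, hv⟩
    · exact (Finset.disjoint_left.mp hdisj hu' hu).elim
    · exact hv
  have hne : Nonempty V := Fintype.card_pos_iff.mp (by omega)
  have hp : 0 < p := by
    obtain ⟨v0⟩ := hne
    obtain ⟨a, ha⟩ := hadj v0
    rcases hbip v0 a ha with ⟨hv, _⟩ | ⟨_, hvX⟩
    · obtain ⟨i, _⟩ := memX v0 hv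
      exact i.pos
    · obtain ⟨i, _⟩ := memX a hvX
      exact i.pos
  set t : Fin p := ⟨p - 1, by omega⟩ with ht
  set u := x t with hu
  have huX : u ∈ X := by
    rw [← hxim]
    exact Finset.mem_image_of_mem x (Finset.mem_univ t)
  have hutop : ∀ y ∈ Y, G.Adj u y := by
    intro y hy
    obtain ⟨z, hz⟩ := hadj y
    obtain ⟨i, rfl⟩ := memX z (hYX hz hy)
    have hle : i ≤ t := by
      have := i.isLt
      simp only [ht, Fin.le_def]
      omega
    exact hxchain i t hle hz.symm
  have hz0X : x ⟨0, hp⟩ ∈ X := by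
    rw [← hxim]
    exact Finset.mem_image_of_mem x (Finset.mem_univ _)
  obtain ⟨w, hw⟩ := hadj (x ⟨0, hp⟩)
  have hwY : w ∈ Y := hXY hw hz0X
  have hwall : ∀ i : Fin p, G.Adj (x i) w := by
    intro i
    exact hxchain ⟨0, hp⟩ i (by simp [Fin.le_def]) hw
  have hwallX : ∀ v ∈ X, G.Adj v w := by
    intro v hv
    obtain ⟨i, rfl⟩ := memX v hv
    exact hwall i
  have huw : G.Adj u w := hwallX u huX
  have claimA : ∀ v ∈ X, v ≠ u → G.degree v = 1 := by
    intro v hv hvne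
    by_contra hdeg
    obtain ⟨⟨a, ha1, ha2⟩, _⟩ := hyp v hdeg
    have haY : a ∈ Y := hXY ha2 hv
    exact two_adj_deg_ne_one ha2.symm (hutop a haY).symm hvne ha1
  have claimB : ∀ v ∈ Y, v ≠ w → G.degree v = 1 := by
    intro v hv hvne
    by_contra hdeg
    obtain ⟨⟨a, ha1, ha2⟩, _⟩ := hyp v hdeg
    have haX : a ∈ X := hYX ha2 hv
    exact two_adj_deg_ne_one ha2.symm (hwallX a haX) hvne ha1
  have hdu : G.degree u ≠ 1 := by
    intro h
    have hNu : G.neighborFinset u = {w} := by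
      obtain ⟨b, hb⟩ := Finset.card_eq_one.mp h
      have hwmem : w ∈ G.neighborFinset u := by simpa using huw
      rw [hb, Finset.mem_singleton] at hwmem
      rw [hb, hwmem]
    have hYw : ∀ y ∈ Y, y = w := by
      intro y hy
      have hym : y ∈ G.neighborFinset u := by simpa using hutop y hy
      rw [hNu, Finset.mem_singleton] at hym
      exact hym
    have hsub : Finset.univ ⊆ X ∪ {w} := by
      intro z _
      have hz : z ∈ X ∪ Y := by rw [hunion]; exact Finset.mem_univ z
      rcases Finset.mem_union.mp hz with h' | h'
      · exact Finset.mem_union_left _ h'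
      · exact Finset.mem_union_right _ (by simp [hYw z h'])
    have h1 : Fintype.card V ≤ (X ∪ ({w} : Finset V)).card := by
      simpa [Finset.card_univ] using Finset.card_le_card hsub
    have h2 : (X ∪ ({w} : Finset V)).card ≤ X.card + 1 := by
      simpa using Finset.card_union_le X ({w} : Finset V)
    have hXcard : 2 ≤ X.card := by omega
    have hdw2 : G.degree w ≠ 1 := by
      have hsub2 : X ⊆ G.neighborFinset w := by
        intro z hz
        simpa using (hwallX z hz).symm
      have h3 := Finset.card_le_card hsub2
      have hdef : G.degree w = (G.neighborFinset w).card := rfl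
      omega
    obtain ⟨_, b, hb1, hb2⟩ := hyp w hdw2
    have hbX : b ∈ X := hYX hb2 hwY
    have hbne : b ≠ u := by
      intro hbe
      exact hb1 (hbe ▸ h)
    exact hb1 (claimA b hbX hbne)
  have hdw : G.degree w ≠ 1 := by
    intro h
    obtain ⟨_, b, hb1, hb2⟩ := hyp u hdu
    have hbY : b ∈ Y := hXY hb2 huX
    have hbne : b ≠ w := by
      intro hbe
      exact hb1 (hbe ▸ h)
    exact hb1 (claimB b hbY hbne)
  refine ⟨u, w, huw, hdu, hdw, ?_⟩
  intro v hvu hvw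
  have hv : v ∈ X ∪ Y := by rw [hunion]; exact Finset.mem_univ v
  rcases Finset.mem_union.mp hv with hvX | hvY
  · exact ⟨claimA v hvX hvu, Or.inr (hwallX v hvX)⟩
  · exact ⟨claimB v hvY hvw, Or.inl (hutop v hvY).symm⟩
end

section
/- Let G = (X,Y,E) be a connected chain graph having at least three vertices, and let t denote the number of pendant vertices of G. Then t ≤ γ_r(G) ≤ t + 2. -/
/-- For a connected chain graph `G` with at least three vertices, if `t` is the number
of pendant vertices of `G`, then `t ≤ γ_r(G) ≤ t + 2`. -/
theorem stmt_11 {V : Type*} [Fintype V] [DecidableEq V] (G : SimpleGraph V)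
    [DecidableRel G.Adj] (hconn : G.Connected) (hcard : 3 ≤ Fintype.card V)
    (X Y : Finset V) (hdisj : Disjoint X Y) (hunion : X ∪ Y = Finset.univ)
    (hbip : ∀ u v, G.Adj u v → (u ∈ X ∧ v ∈ Y) ∨ (u ∈ Y ∧ v ∈ X))
    (p : ℕ) (x : Fin p → V) (hxinj : Function.Injective x)
    (hxim : Finset.univ.image x = X)
    (hxchain : ∀ i j : Fin p, i ≤ j → G.neighborSet (x i) ⊆ G.neighborSet (x j))
    (t : ℕ) (ht : t = (Finset.univ.filter (fun v => G.degree v = 1)).card) :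
    t ≤ restrainedDominationNumber G ∧ restrainedDominationNumber G ≤ t + 2 := by
  classical
  set P : Finset V := Finset.univ.filter (fun v => G.degree v = 1) with hP
  -- every vertex has positive degree
  have hdeg : ∀ v : V, 0 < G.degree v := by
    intro v
    obtain ⟨w, hw⟩ : ∃ w, w ≠ v := by
      have : 1 < Fintype.card V := by omega
      exact Fintype.exists_ne_of_one_lt_card this v
    obtain ⟨pw⟩ := hconn.preconnected v w
    cases pw with
    | nil => exact absurd rfl hw
    | cons h q => exact G.degree_pos_iff_exists_adj v |>.mpr ⟨_, h⟩
  have hXY : ∀ v : V, v ∈ X ∨ v ∈ Y := by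
    intro v
    have : v ∈ X ∪ Y := hunion ▸ Finset.mem_univ v
    exact Finset.mem_union.mp this
  have hnXY : ∀ v : V, v ∈ X → v ∈ Y → False := fun v hX hY =>
    Finset.disjoint_left.mp hdisj hX hY
  -- the adjacency side lemmas
  have hadjX : ∀ v w : V, v ∈ X → G.Adj v w → w ∈ Y := by
    intro v w hv h
    rcases hbip v w h with ⟨_, hw⟩ | ⟨hv', _⟩
    · exact hw
    · exact absurd hv' (fun h' => hnXY v hv h')
  have hadjY : ∀ v w : V, v ∈ Y → G.Adj v w → w ∈ X := by
    intro v w hv h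
    rcases hbip v w h with ⟨hv', _⟩ | ⟨_, hw⟩
    · exact absurd hv (fun h' => hnXY v hv' h')
    · exact hw
  have hne : {n | ∃ D : Finset V, IsRestrainedDominatingSet G D ∧ D.card = n}.Nonempty := by
    refine ⟨(Finset.univ : Finset V).card, Finset.univ, ⟨?_, ?_⟩, rfl⟩ <;>
      intro v hv <;> exact absurd (Finset.mem_univ v) hv
  constructor
  · -- lower bound
    obtain ⟨D, hD, hcardD⟩ := Nat.sInf_mem hne
    have hPD : P ⊆ D := by
      intro v hv
      by_contra hvD
      obtain ⟨u, huD, hadj⟩ := hD.1 v hvD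
      obtain ⟨w, hwD, hadjw⟩ := hD.2 v hvD
      have hdeg1 : G.degree v = 1 := (Finset.mem_filter.mp hv).2
      have hne' : u ≠ w := fun h => hwD (h ▸ huD)
      have h2 : 1 < G.degree v := by
        rw [← SimpleGraph.card_neighborFinset_eq_degree]
        exact Finset.one_lt_card.mpr
          ⟨u, (SimpleGraph.mem_neighborFinset G v u).mpr hadj,
           w, (SimpleGraph.mem_neighborFinset G v w).mpr hadjw, hne'⟩
      omega
    have : t ≤ D.card := ht ▸ Finset.card_le_card hPD
    unfold restrainedDominationNumber
    exact le_trans this (le_of_eq hcardD)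
  · -- upper bound
    -- X and Y are nonempty
    obtain ⟨v0⟩ : Nonempty V := Fintype.card_pos_iff.mp (by omega)
    obtain ⟨w0, hw0⟩ := (G.degree_pos_iff_exists_adj v0).mp (hdeg v0)
    have hXYne : X.Nonempty ∧ Y.Nonempty := by
      rcases hbip v0 w0 hw0 with ⟨h1, h2⟩ | ⟨h1, h2⟩
      · exact ⟨⟨v0, h1⟩, ⟨w0, h2⟩⟩
      · exact ⟨⟨w0, h2⟩, ⟨v0, h1⟩⟩
    have hp : 0 < p := by
      obtain ⟨u, hu⟩ := hXYne.1
      rw [← hxim, Finset.mem_image] at hu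
      obtain ⟨i, _, _⟩ := hu
      exact i.pos
    set top : Fin p := ⟨p - 1, Nat.sub_lt hp one_pos⟩ with htop
    have hle : ∀ i : Fin p, i ≤ top := by
      intro i
      have := i.isLt
      simp only [Fin.le_def, htop]
      omega
    set xT : V := x top with hxT
    have hxTX : xT ∈ X := by
      rw [← hxim, Finset.mem_image]; exact ⟨top, Finset.mem_univ _, rfl⟩
    have hmemX : ∀ u : V, u ∈ X → ∃ i : Fin p, x i = u := by
      intro u hu
      rw [← hxim, Finset.mem_image] at hu
      obtain ⟨i, _, hi⟩ := hu
      exact ⟨i, hi⟩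
    -- choose ystar of maximal degree in Y
    obtain ⟨ystar, hyY, hymax⟩ := Y.exists_max_image (fun y => G.degree y) hXYne.2
    -- index sets
    set S : V → Finset (Fin p) := fun y => Finset.univ.filter (fun i => G.Adj (x i) y) with hS
    have hup : ∀ (y : V) (i j : Fin p), i ≤ j → i ∈ S y → j ∈ S y := by
      intro y i j hij hi
      rw [hS, Finset.mem_filter] at hi ⊢
      exact ⟨Finset.mem_univ _, hxchain i j hij hi.2⟩
    have hScard : ∀ y ∈ Y, (S y).card = G.degree y := by
      intro y hy
      have himg : (S y).image x = G.neighborFinset y := by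
        ext u
        simp only [Finset.mem_image, SimpleGraph.mem_neighborFinset, hS, Finset.mem_filter,
          Finset.mem_univ, true_and]
        constructor
        · rintro ⟨i, hi, rfl⟩; exact hi.symm
        · intro h
          obtain ⟨i, hi⟩ := hmemX u (hadjY y u hy h)
          exact ⟨i, hi ▸ h.symm, hi⟩
      calc (S y).card = ((S y).image x).card := (Finset.card_image_of_injective _ hxinj).symm
        _ = (G.neighborFinset y).card := by rw [himg]
        _ = G.degree y := G.card_neighborFinset_eq_degree y
    have hSsub : ∀ y ∈ Y, S y ⊆ S ystar := by
      intro y hy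
      by_cases hc : S y ⊆ S ystar
      · exact hc
      · obtain ⟨i, hiy, hiys⟩ := Finset.not_subset.mp hc
        have hsub' : S ystar ⊆ S y := by
          intro j hj
          rcases le_total i j with h | h
          · exact hup y i j h hiy
          · exact absurd (hup ystar j i h hj) hiys
        have hcard' : (S y).card ≤ (S ystar).card := by
          rw [hScard y hy, hScard ystar hyY]; exact hymax y hy
        have := Finset.eq_of_subset_of_card_le hsub' hcard'
        rw [this]
    -- key adjacency lemmas
    have hTop : ∀ y ∈ Y, G.Adj xT y := by
      intro y hy
      obtain ⟨u, hu⟩ := (G.degree_pos_iff_exists_adj y).mp (hdeg y)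
      obtain ⟨i, hi⟩ := hmemX u (hadjY y u hy hu)
      have : y ∈ G.neighborSet (x i) := by
        rw [SimpleGraph.mem_neighborSet, hi]; exact hu.symm
      exact hxchain i top (hle i) this
    have hStar : ∀ u ∈ X, G.Adj ystar u := by
      intro u hu
      obtain ⟨w, hw⟩ := (G.degree_pos_iff_exists_adj u).mp (hdeg u)
      have hwY : w ∈ Y := hadjX u w hu hw
      obtain ⟨i, hi⟩ := hmemX u hu
      have hiw : i ∈ S w := by
        rw [hS, Finset.mem_filter]; exact ⟨Finset.mem_univ _, hi ▸ hw⟩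
      have := hSsub w hwY hiw
      rw [hS, Finset.mem_filter] at this
      exact hi ▸ this.2.symm
    -- the dominating set
    set D : Finset V := P ∪ {xT, ystar} with hD
    have hxTD : xT ∈ D := Finset.mem_union_right _ (by simp)
    have hysD : ystar ∈ D := Finset.mem_union_right _ (by simp)
    have hDrds : IsRestrainedDominatingSet G D := by
      constructor
      · intro v hv
        rcases hXY v with hvX | hvY
        · exact ⟨ystar, hysD, (hStar v hvX).symm⟩
        · exact ⟨xT, hxTD, (hTop v hvY).symm⟩
      · intro v hv
        have hvP : v ∉ P := fun h => hv (Finset.mem_union_left _ h)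
        have hdv : 1 < G.degree v := by
          have h1 := hdeg v
          have h2 : G.degree v ≠ 1 := by
            intro h; exact hvP (Finset.mem_filter.mpr ⟨Finset.mem_univ _, h⟩)
          omega
        rw [← SimpleGraph.card_neighborFinset_eq_degree] at hdv
        rcases hXY v with hvX | hvY
        · obtain ⟨w, hw, hwne⟩ := Finset.exists_mem_ne hdv ystar
          rw [SimpleGraph.mem_neighborFinset] at hw
          have hwY : w ∈ Y := hadjX v w hvX hw
          have hwP : w ∉ P := by
            intro hmem
            have hd1 : G.degree w = 1 := (Finset.mem_filter.mp hmem).2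
            have : 1 < G.degree w := by
              rw [← SimpleGraph.card_neighborFinset_eq_degree]
              refine Finset.one_lt_card.mpr ⟨v, ?_, xT, ?_, fun h => hv (h ▸ hxTD)⟩
              · exact (SimpleGraph.mem_neighborFinset G w v).mpr hw.symm
              · exact (SimpleGraph.mem_neighborFinset G w xT).mpr (hTop w hwY).symm
            omega
          refine ⟨w, ?_, hw⟩
          intro hwD
          rcases Finset.mem_union.mp hwD with h | h
          · exact hwP h
          · rcases Finset.mem_insert.mp h with h | h
            · exact hnXY w (h ▸ hxTX) hwY
            · exact hwne (by rwa [Finset.mem_singleton] at h)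
        · obtain ⟨w, hw, hwne⟩ := Finset.exists_mem_ne hdv xT
          rw [SimpleGraph.mem_neighborFinset] at hw
          have hwX : w ∈ X := hadjY v w hvY hw
          have hwP : w ∉ P := by
            intro hmem
            have hd1 : G.degree w = 1 := (Finset.mem_filter.mp hmem).2
            have : 1 < G.degree w := by
              rw [← SimpleGraph.card_neighborFinset_eq_degree]
              refine Finset.one_lt_card.mpr ⟨v, ?_, ystar, ?_, fun h => hv (h ▸ hysD)⟩
              · exact (SimpleGraph.mem_neighborFinset G w v).mpr hw.symm
              · exact (SimpleGraph.mem_neighborFinset G w ystar).mpr (hStar w hwX).symm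
            omega
          refine ⟨w, ?_, hw⟩
          intro hwD
          rcases Finset.mem_union.mp hwD with h | h
          · exact hwP h
          · rcases Finset.mem_insert.mp h with h | h
            · exact hwne h
            · exact hnXY w hwX (by rw [Finset.mem_singleton] at h; exact h ▸ hyY)
    have hcardD : D.card ≤ t + 2 := by
      calc D.card ≤ P.card + ({xT, ystar} : Finset V).card := Finset.card_union_le _ _
        _ ≤ P.card + 2 := by
            have : ({xT, ystar} : Finset V).card ≤ 2 := Finset.card_le_two
            omega
        _ = t + 2 := by rw [ht]
    have : restrainedDominationNumber G ≤ D.card := Nat.sInf_le ⟨D, hDrds, rfl⟩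
    omega
end

section
/- Let G = (X,Y,E) be a connected chain graph having at least three vertices, and let t denote the number of pendant vertices of G. Then γ_r(G) = t if and only if G is isomorphic to K_2 or G is a bi-star. -/
private lemma walk_stuck {V : Type*} {G : SimpleGraph V} {v z : V}
    (hv : ∀ a, G.Adj v a → a = z) (hz : ∀ a, G.Adj z a → a = v) :
    ∀ {a u : V}, G.Walk a u → (a = v ∨ a = z) → (u = v ∨ u = z) := by
  intro a u w
  induction w with
  | nil => exact fun h => h
  | cons h p ih =>
    rintro (rfl | rfl)
    · exact ih (Or.inr (hv _ h))
    · exact ih (Or.inl (hz _ h))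

/-- For a connected chain graph `G` with at least three vertices, if `t` is the number
of pendant vertices of `G`, then `γ_r(G) = t` if and only if `G` is isomorphic to `K₂`
or `G` is a bi-star. -/
theorem stmt_12 {V : Type*} [Fintype V] [DecidableEq V] (G : SimpleGraph V)
    [DecidableRel G.Adj] (hconn : G.Connected) (hcard : 3 ≤ Fintype.card V)
    (X Y : Finset V) (hdisj : Disjoint X Y) (hunion : X ∪ Y = Finset.univ)
    (hbip : ∀ u v, G.Adj u v → (u ∈ X ∧ v ∈ Y) ∨ (u ∈ Y ∧ v ∈ X))
    (p : ℕ) (x : Fin p → V) (hxinj : Function.Injective x)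
    (hxim : Finset.univ.image x = X)
    (hxchain : ∀ i j : Fin p, i ≤ j → G.neighborSet (x i) ⊆ G.neighborSet (x j))
    (t : ℕ) (ht : t = (Finset.univ.filter (fun v => G.degree v = 1)).card) :
    restrainedDominationNumber G = t ↔
      (Nonempty (G ≃g (⊤ : SimpleGraph (Fin 2))) ∨ IsBiStar G) := by
  subst ht
  set P : Finset V := Finset.univ.filter (fun v => G.degree v = 1) with hP
  have hmemP : ∀ v : V, v ∈ P ↔ G.degree v = 1 := by
    intro v; simp [hP]
  -- if degree v = 1, v has a unique neighbor
  have degone : ∀ {v : V}, G.degree v = 1 → ∃ z, G.Adj v z ∧ ∀ a, G.Adj v a → a = z := by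
    intro v h
    rw [← SimpleGraph.card_neighborFinset_eq_degree, Finset.card_eq_one] at h
    obtain ⟨c, hc⟩ := h
    refine ⟨c, ?_, ?_⟩
    · have : c ∈ G.neighborFinset v := hc ▸ Finset.mem_singleton_self c
      exact (SimpleGraph.mem_neighborFinset G v c).mp this
    · intro a ha
      have : a ∈ G.neighborFinset v := (SimpleGraph.mem_neighborFinset G v a).mpr ha
      rw [hc, Finset.mem_singleton] at this
      exact this
  -- pendants are contained in every restrained dominating set
  have hPsub : ∀ D : Finset V, IsRestrainedDominatingSet G D → P ⊆ D := by
    rintro D ⟨h1, h2⟩ v hv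
    by_contra hvD
    obtain ⟨z, hz, huniq⟩ := degone ((hmemP v).mp hv)
    obtain ⟨u1, hu1D, hu1⟩ := h1 v hvD
    obtain ⟨u2, hu2D, hu2⟩ := h2 v hvD
    rw [huniq u1 hu1] at hu1D
    rw [huniq u2 hu2] at hu2D
    exact hu2D hu1D
  have hunivRDS : IsRestrainedDominatingSet G Finset.univ :=
    ⟨fun v hv => absurd (Finset.mem_univ v) hv, fun v hv => absurd (Finset.mem_univ v) hv⟩
  have hSne : {n | ∃ D : Finset V, IsRestrainedDominatingSet G D ∧ D.card = n}.Nonempty :=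
    ⟨Finset.univ.card, Finset.univ, hunivRDS, rfl⟩
  -- no K2 isomorphism possible
  have hK2 : ¬ Nonempty (G ≃g (⊤ : SimpleGraph (Fin 2))) := by
    rintro ⟨e⟩
    have := Fintype.card_congr e.toEquiv
    simp [Fintype.card_fin] at this
    omega
  -- pendant-pendant adjacent pair is impossible (connected, ≥ 3 vertices)
  have hpair : ∀ v z : V, G.Adj v z → G.degree v = 1 → G.degree z = 1 →
      ∀ u : V, u ≠ v → u ≠ z → False := by
    intro v z hvz hdv hdz u huv huz
    obtain ⟨zv, _, hv'⟩ := degone hdv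
    obtain ⟨zz, _, hz'⟩ := degone hdz
    have hv'' : ∀ a, G.Adj v a → a = z := fun a ha => (hv' a ha).trans (hv' z hvz).symm
    have hz'' : ∀ a, G.Adj z a → a = v := fun a ha => (hz' a ha).trans (hz' v hvz.symm).symm
    obtain ⟨w⟩ := hconn.preconnected v u
    rcases walk_stuck hv'' hz'' w (Or.inl rfl) with rfl | rfl
    · exact huv rfl
    · exact huz rfl
  constructor
  · -- forward: γ_r = t implies bi-star
    intro h
    right
    have hmem : P.card ∈ {n | ∃ D : Finset V, IsRestrainedDominatingSet G D ∧ D.card = n} :=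
      h ▸ Nat.sInf_mem hSne
    obtain ⟨D, hD, hDcard⟩ := hmem
    have hDP : P = D := Finset.eq_of_subset_of_card_le (hPsub D hD) (le_of_eq hDcard)
    rw [← hDP] at hD
    -- Claim A helper: non-pendant x i with i ≤ j forces x i = x j
    have keyA : ∀ i j : Fin p, i ≤ j → x i ∉ P → x i = x j := by
      intro i j hij hiP
      obtain ⟨y, hyP, hy⟩ := hD.1 _ hiP
      have hyj : G.Adj (x j) y :=
        (G.mem_neighborSet (x j) y).mp (hxchain i j hij ((G.mem_neighborSet (x i) y).mpr hy))
      obtain ⟨c, _, hu⟩ := degone ((hmemP y).mp hyP)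
      exact (hu _ hy.symm).trans (hu _ hyj.symm).symm
    have claimA : ∀ a b : V, a ∈ X → b ∈ X → a ∉ P → b ∉ P → a = b := by
      intro a b haX hbX haP hbP
      rw [← hxim, Finset.mem_image] at haX hbX
      obtain ⟨i, _, rfl⟩ := haX
      obtain ⟨j, _, rfl⟩ := hbX
      rcases le_total i j with hij | hij
      · exact keyA i j hij haP
      · exact (keyA j i hij hbP).symm
    -- Claim B helper
    have keyB : ∀ (a b : V) (i j : Fin p), i ≤ j → G.Adj a (x i) → G.Adj b (x j) →
        G.degree (x j) = 1 → a = b := by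
      intro a b i j hij ha hb hdeg
      have hja : G.Adj (x j) a :=
        (G.mem_neighborSet (x j) a).mp (hxchain i j hij ((G.mem_neighborSet (x i) a).mpr ha.symm))
      obtain ⟨c, _, hu⟩ := degone hdeg
      exact (hu _ hja).trans (hu _ hb.symm).symm
    have claimB : ∀ a b : V, a ∈ Y → b ∈ Y → a ∉ P → b ∉ P → a = b := by
      intro a b haY hbY haP hbP
      obtain ⟨c, hcP, hca⟩ := hD.1 a haP
      obtain ⟨d, hdP, hdb⟩ := hD.1 b hbP
      have hcX : c ∈ X := by
        rcases hbip a c hca with ⟨haX, _⟩ | ⟨_, hcX⟩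
        · exact absurd haX (fun h => (Finset.disjoint_left.mp hdisj h) haY)
        · exact hcX
      have hdX : d ∈ X := by
        rcases hbip b d hdb with ⟨hbX, _⟩ | ⟨_, hdX⟩
        · exact absurd hbX (fun h => (Finset.disjoint_left.mp hdisj h) hbY)
        · exact hdX
      rw [← hxim, Finset.mem_image] at hcX hdX
      obtain ⟨i, _, rfl⟩ := hcX
      obtain ⟨j, _, rfl⟩ := hdX
      rcases le_total i j with hij | hij
      · exact keyB a b i j hij hca hdb ((hmemP _).mp hdP)
      · exact (keyB b a j i hij hdb hca ((hmemP _).mp hcP)).symm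
    by_cases hall : ∀ v : V, G.degree v = 1
    · -- all pendant: impossible
      exfalso
      have : Nonempty V := Fintype.card_pos_iff.mp (by omega)
      obtain ⟨v⟩ := this
      obtain ⟨z, hvz, _⟩ := degone (hall v)
      have hex : ∃ u : V, u ≠ v ∧ u ≠ z := by
        by_contra hcon
        push_neg at hcon
        have hsub : (Finset.univ : Finset V) ⊆ {v, z} := by
          intro u _
        -- u = v or u = z
          rcases eq_or_ne u v with rfl | huv
          · simp
          · simp [hcon u huv]
        have := Finset.card_le_card hsub
        have h2 : ({v, z} : Finset V).card ≤ 2 := Finset.card_le_two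
        rw [Finset.card_univ] at this
        omega
      obtain ⟨u, huv, huz⟩ := hex
      exact hpair v z hvz (hall v) (hall z) u huv huz
    · push_neg at hall
      obtain ⟨a, ha⟩ := hall
      have haP : a ∉ P := fun h => ha ((hmemP a).mp h)
      obtain ⟨b, hbP, hab⟩ := hD.2 a haP
      -- the generic construction
      have general : ∀ u w : V, u ∈ X → w ∈ Y → u ∉ P → w ∉ P → G.Adj u w → IsBiStar G := by
        intro u w huX hwY huP hwP huw
        have hnonpend : ∀ v : V, v ≠ u → v ≠ w → G.degree v = 1 := by
          intro v hvu hvw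
          by_contra hnv
          have hvP : v ∉ P := fun h => hnv ((hmemP v).mp h)
          have hvXY : v ∈ X ∨ v ∈ Y := by
            have : v ∈ X ∪ Y := hunion ▸ Finset.mem_univ v
            exact Finset.mem_union.mp this
          rcases hvXY with hvX | hvY
          · exact hvu (claimA v u hvX huX hvP huP)
          · exact hvw (claimB v w hvY hwY hvP hwP)
        refine ⟨u, w, huw, fun h => huP ((hmemP u).mpr h), fun h => hwP ((hmemP w).mpr h), ?_⟩
        intro v hvu hvw
        have hdegv := hnonpend v hvu hvw
        refine ⟨hdegv, ?_⟩
        obtain ⟨z, hvz, _⟩ := degone hdegv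
        by_cases hzu : z = u
        · exact Or.inl (hzu ▸ hvz)
        by_cases hzw : z = w
        · exact Or.inr (hzw ▸ hvz)
        exfalso
        exact hpair v z hvz hdegv (hnonpend z hzu hzw) u (Ne.symm hvu) (fun h => hzu h.symm)
      rcases hbip a b hab with ⟨haX, hbY⟩ | ⟨haY, hbX⟩
      · exact general a b haX hbY haP hbP hab
      · exact general b a hbX haY hbP haP hab.symm
  · -- backward: bi-star implies γ_r = t
    rintro (hiso | hbs)
    · exact absurd hiso hK2
    obtain ⟨u, w, huw, hdu, hdw, hall⟩ := hbs
    -- each center has a pendant neighbor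
    have center : ∀ c c' : V, G.Adj c c' → G.degree c ≠ 1 →
        (∀ v, v ≠ c → v ≠ c' → G.degree v = 1 ∧ (G.Adj v c ∨ G.Adj v c')) →
        ∃ a ∈ P, G.Adj c a := by
      intro c c' hcc' hdegc hrest
      by_contra hno
      push_neg at hno
      apply hdegc
      have hNc : G.neighborFinset c = {c'} := by
        ext b
        rw [SimpleGraph.mem_neighborFinset, Finset.mem_singleton]
        constructor
        · intro hcb
          by_contra hbc'
          have hbc : b ≠ c := fun h => G.irrefl (h ▸ hcb)
          have := (hrest b hbc hbc').1
          exact hno b ((hmemP b).mpr this) hcb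
        · rintro rfl; exact hcc'
      rw [← SimpleGraph.card_neighborFinset_eq_degree, hNc, Finset.card_singleton]
    have hPRDS : IsRestrainedDominatingSet G P := by
      have hvP : ∀ v : V, v ∉ P → v = u ∨ v = w := by
        intro v hv
        by_contra hc
        push_neg at hc
        exact hv ((hmemP v).mpr (hall v hc.1 hc.2).1)
      constructor
      · intro v hv
        rcases hvP v hv with rfl | rfl
        · obtain ⟨a, haP, hca⟩ := center v w huw (fun h => hv ((hmemP v).mpr h))
            (fun z hz1 hz2 => hall z hz1 hz2)
          exact ⟨a, haP, hca⟩
        · obtain ⟨a, haP, hca⟩ := center v u huw.symm (fun h => hv ((hmemP v).mpr h))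
            (fun z hz1 hz2 => ⟨(hall z hz2 hz1).1, (hall z hz2 hz1).2.symm⟩)
          exact ⟨a, haP, hca⟩
      · intro v hv
        rcases hvP v hv with rfl | rfl
        · exact ⟨w, fun h => hdw ((hmemP w).mp h), huw⟩
        · exact ⟨u, fun h => hdu ((hmemP u).mp h), huw.symm⟩
    apply le_antisymm
    · exact Nat.sInf_le ⟨P, hPRDS, rfl⟩
    · refine le_csInf hSne ?_
      rintro n ⟨D, hD, rfl⟩
      exact Finset.card_le_card (hPsub D hD)
end

section
/- Let G = (X,Y,E) be a connected chain graph having at least three vertices, let t denote the number of pendant vertices of G, let P denote the set of all pendant vertices of G, and let P_A denote the set of vertices adjacent to a vertex of P. Then γ_r(G) = t + 1 if and only if either G is a star or the induced subgraph G' = G[(X ∪ Y) \ (P ∪ P_A)] is a star. -/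
/-- The subgraph of `G` induced by `S` is a star `K_{1,k}` (`k ≥ 1`): there is a center
`c ∈ S` adjacent (in `G`) to every other vertex of `S`, there is at least one other
vertex in `S`, and every edge of `G` inside `S` is incident to `c`. -/
def IsStarOn {V : Type*} (G : SimpleGraph V) (S : Finset V) : Prop :=
  ∃ c ∈ S, (∃ v ∈ S, v ≠ c) ∧ (∀ v ∈ S, v ≠ c → G.Adj c v) ∧
    ∀ u ∈ S, ∀ v ∈ S, G.Adj u v → u = c ∨ v = c

open Finset

lemma isRestrainedDominatingSet_univ {V : Type*} [Fintype V] (G : SimpleGraph V) :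
    IsRestrainedDominatingSet G univ :=
  ⟨fun v hv => absurd (mem_univ v) hv, fun v hv => absurd (mem_univ v) hv⟩

lemma IsRestrainedDominatingSet.mem_of_degree_eq_one {V : Type*} {G : SimpleGraph V}
    {D : Finset V} (hD : IsRestrainedDominatingSet G D) {v : V} [Fintype (G.neighborSet v)]
    (hv : G.degree v = 1) : v ∈ D := by
  by_contra hvD
  obtain ⟨u, huD, hvu⟩ := hD.1 v hvD
  obtain ⟨u', hu'D, hvu'⟩ := hD.2 v hvD
  have hunique := SimpleGraph.degree_eq_one_iff_existsUnique_adj.1 hv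
  exact hu'D (hunique.unique hvu hvu' ▸ huD)

lemma exists_isRestrainedDominatingSet_card_eq {V : Type*} [Fintype V] (G : SimpleGraph V) :
    ∃ D, IsRestrainedDominatingSet G D ∧ #D = restrainedDominationNumber G :=
  Nat.sInf_mem (s := {n | ∃ D, IsRestrainedDominatingSet G D ∧ #D = n})
    ⟨_, univ, isRestrainedDominatingSet_univ G, rfl⟩

lemma IsRestrainedDominatingSet.restrainedDominationNumber_le {V : Type*} [Fintype V]
    {G : SimpleGraph V} {D : Finset V} (hD : IsRestrainedDominatingSet G D) :
    restrainedDominationNumber G ≤ #D :=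
  Nat.sInf_le ⟨D, hD, rfl⟩

lemma le_restrainedDominationNumber {V : Type*} [Fintype V] {G : SimpleGraph V} {n : ℕ}
    (h : ∀ D, IsRestrainedDominatingSet G D → n ≤ #D) : n ≤ restrainedDominationNumber G := by
  refine le_csInf ⟨_, univ, isRestrainedDominatingSet_univ G, rfl⟩ ?_
  rintro _ ⟨D, hD, rfl⟩
  exact h D hD

lemma restrainedDominationNumber_eq_card_add_one_iff {V : Type*} [Fintype V] [DecidableEq V]
    {G : SimpleGraph V} {S : Finset V} (hS : ∀ D, IsRestrainedDominatingSet G D → S ⊆ D) :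
    restrainedDominationNumber G = #S + 1 ↔
      ¬ IsRestrainedDominatingSet G S ∧ ∃ w ∉ S, IsRestrainedDominatingSet G (insert w S) := by
  constructor
  · intro h
    obtain ⟨D, hD, hcard⟩ := exists_isRestrainedDominatingSet_card_eq G
    refine ⟨fun hSdom => by have := hSdom.restrainedDominationNumber_le; omega, ?_⟩
    obtain ⟨w, hw, rfl⟩ := exists_eq_insert_iff.2 ⟨hS D hD, (hcard.trans h).symm⟩
    exact ⟨w, hw, hD⟩
  · rintro ⟨hSdom, w, hw, hD⟩
    refine le_antisymm ((card_insert_of_notMem hw) ▸ hD.restrainedDominationNumber_le) ?_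
    refine le_restrainedDominationNumber fun D hD' => card_lt_card ?_
    exact (hS D hD').ssubset_of_ne (by rintro rfl; exact hSdom hD')

lemma cliqueFree_three_of_bipartite {V : Type*} {G : SimpleGraph V} {X Y : Finset V}
    (hdisj : Disjoint X Y) (hbip : ∀ u v, G.Adj u v → (u ∈ X ∧ v ∈ Y) ∨ (u ∈ Y ∧ v ∈ X)) :
    G.CliqueFree 3 := by
  classical
  intro s hs
  obtain ⟨a, b, c, hab, hac, hbc, -⟩ := SimpleGraph.is3Clique_iff.1 hs
  have hXY : ∀ v, v ∈ X → v ∉ Y := fun v hv => disjoint_left.1 hdisj hv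
  rcases hbip a b hab with ⟨ha, hb⟩ | ⟨ha, hb⟩ <;>
    rcases hbip a c hac with ⟨ha', hc⟩ | ⟨ha', hc⟩ <;>
    rcases hbip b c hbc with ⟨hb', hc'⟩ | ⟨hb', hc'⟩ <;> tauto

namespace SimpleGraph

variable {V : Type*} [Fintype V] (G : SimpleGraph V) [DecidableRel G.Adj]

def pendantVertices : Finset V := univ.filter fun v => G.degree v = 1

def supportVertices : Finset V := univ.filter fun v => ∃ u ∈ G.pendantVertices, G.Adj v u

/-- The vertex set of `G'`. -/
def residualVertices [DecidableEq V] : Finset V := univ \ (G.pendantVertices ∪ G.supportVertices)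

def SupportVerticesDominateEdges : Prop :=
  ∀ s ∈ G.supportVertices, ∀ u w, G.Adj u w → G.Adj s u ∨ G.Adj s w

variable {G}

lemma mem_pendantVertices {v : V} : v ∈ G.pendantVertices ↔ G.degree v = 1 := by
  simp [pendantVertices]

lemma mem_supportVertices {v : V} : v ∈ G.supportVertices ↔ ∃ u ∈ G.pendantVertices, G.Adj v u := by
  simp only [supportVertices, mem_filter, mem_univ, true_and]

lemma mem_residualVertices [DecidableEq V] {v : V} :
    v ∈ G.residualVertices ↔ v ∉ G.pendantVertices ∧ v ∉ G.supportVertices := by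
  simp [residualVertices]

lemma _root_.IsRestrainedDominatingSet.pendantVertices_subset {D : Finset V}
    (hD : IsRestrainedDominatingSet G D) : G.pendantVertices ⊆ D :=
  fun _ hv => hD.mem_of_degree_eq_one (mem_pendantVertices.1 hv)

lemma eq_of_adj_of_mem_pendantVertices {q a b : V} (hq : q ∈ G.pendantVertices)
    (ha : G.Adj q a) (hb : G.Adj q b) : a = b :=
  (degree_eq_one_iff_existsUnique_adj.1 (mem_pendantVertices.1 hq)).unique ha hb

lemma exists_adj_ne_of_notMem_pendantVertices {v u : V} (hv : v ∉ G.pendantVertices)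
    (hvu : G.Adj v u) : ∃ a ≠ u, G.Adj v a := by
  by_contra! h
  exact hv (mem_pendantVertices.2 (degree_eq_one_iff_existsUnique_adj.2
    ⟨u, hvu, fun a hva => by_contra fun hau => h a hau hva⟩))

lemma notMem_pendantVertices_of_adj {v u : V} (hv : v ∉ G.supportVertices) (hvu : G.Adj v u) :
    u ∉ G.pendantVertices :=
  fun hu => hv (mem_supportVertices.2 ⟨u, hu, hvu⟩)

lemma not_adj_of_mem_pendantVertices (hcard : 3 ≤ Fintype.card V) (hadj : ∀ v, ∃ u, G.Adj v u)
    (hdom : G.SupportVerticesDominateEdges)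
    {q r : V} (hq : q ∈ G.pendantVertices) (hr : r ∈ G.pendantVertices) : ¬ G.Adj q r := by
  intro hqr
  classical
  obtain ⟨v, -, hv⟩ := exists_mem_notMem_of_card_lt_card
    (s := {q, r}) (t := univ) (by rw [card_univ]; exact (card_le_two).trans_lt (by omega))
  obtain ⟨u, hvu⟩ := hadj v
  have hqs : q ∈ G.supportVertices := mem_supportVertices.2 ⟨r, hr, hqr⟩
  rcases hdom q hqs v u hvu with hqv | hqu
  · exact hv (by simp [eq_of_adj_of_mem_pendantVertices hq hqv hqr])
  · obtain rfl := eq_of_adj_of_mem_pendantVertices hq hqu hqr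
    exact hv (by simp [eq_of_adj_of_mem_pendantVertices hr hvu.symm hqr.symm])

lemma notMem_pendantVertices_of_mem_supportVertices (hcard : 3 ≤ Fintype.card V)
    (hadj : ∀ v, ∃ u, G.Adj v u)
    (hdom : G.SupportVerticesDominateEdges)
    {s : V} (hs : s ∈ G.supportVertices) : s ∉ G.pendantVertices := by
  obtain ⟨q, hq, hsq⟩ := mem_supportVertices.1 hs
  exact fun hsP => not_adj_of_mem_pendantVertices hcard hadj hdom hsP hq hsq

lemma adj_of_mem_supportVertices
    (hdom : G.SupportVerticesDominateEdges)
    {s s' : V} (hs : s ∈ G.supportVertices) (hs' : s' ∈ G.supportVertices) (hne : s ≠ s') :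
    G.Adj s s' := by
  obtain ⟨q', hq', hs'q'⟩ := mem_supportVertices.1 hs'
  refine (hdom s hs s' q' hs'q').resolve_right fun hsq' => hne ?_
  exact eq_of_adj_of_mem_pendantVertices hq' hsq'.symm hs'q'.symm

section Residual

variable [DecidableEq V]

lemma exists_adj_mem_residualVertices (htri : G.CliqueFree 3) (hadj : ∀ v, ∃ u, G.Adj v u)
    (hdom : G.SupportVerticesDominateEdges)
    {g : V} (hg : g ∈ G.residualVertices) : ∃ u ∈ G.residualVertices, G.Adj g u := by
  rw [mem_residualVertices] at hg
  obtain ⟨u, hgu⟩ := hadj g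
  obtain ⟨a, hau, hga⟩ := exists_adj_ne_of_notMem_pendantVertices hg.1 hgu
  by_cases hu : u ∈ G.supportVertices
  · by_cases ha : a ∈ G.supportVertices
    · have hua := adj_of_mem_supportVertices hdom hu ha hau.symm
      exact absurd (is3Clique_triple_iff.2 ⟨hgu, hga, hua⟩) (htri _)
    · exact ⟨a, mem_residualVertices.2 ⟨notMem_pendantVertices_of_adj hg.2 hga, ha⟩, hga⟩
  · exact ⟨u, mem_residualVertices.2 ⟨notMem_pendantVertices_of_adj hg.2 hgu, hu⟩, hgu⟩

lemma isStarOn_residualVertices_of_isRestrainedDominatingSet_insert (htri : G.CliqueFree 3)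
    (hadj : ∀ v, ∃ u, G.Adj v u)
    (hdom : G.SupportVerticesDominateEdges)
    (hres : G.residualVertices.Nonempty) {w : V} (hw : w ∉ G.pendantVertices)
    (hD : IsRestrainedDominatingSet G (insert w G.pendantVertices)) :
    IsStarOn G G.residualVertices := by
  have hcentre : ∀ v ∈ G.residualVertices, v ≠ w → G.Adj w v := by
    intro v hv hvw
    rw [mem_residualVertices] at hv
    obtain ⟨u, hu, hvu⟩ := hD.1 v (by simp [hvw, hv.1])
    obtain rfl | huP := mem_insert.1 hu
    · exact hvu.symm
    · exact absurd huP (notMem_pendantVertices_of_adj hv.2 hvu)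
  have hno_edge : ∀ u ∈ G.residualVertices, ∀ v ∈ G.residualVertices, u ≠ w → v ≠ w →
      ¬ G.Adj u v := fun u hu v hv huw hvw huv =>
    htri _ (is3Clique_triple_iff.2 ⟨hcentre u hu huw, hcentre v hv hvw, huv⟩)
  have hwR : w ∈ G.residualVertices := by
    by_contra hwR
    obtain ⟨g, hg⟩ := hres
    obtain ⟨u, hu, hgu⟩ := exists_adj_mem_residualVertices htri hadj hdom hg
    exact hno_edge g hg u hu (by rintro rfl; exact hwR hg) (by rintro rfl; exact hwR hu) hgu
  obtain ⟨l, hl, hwl⟩ := exists_adj_mem_residualVertices htri hadj hdom hwR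
  refine ⟨w, hwR, ⟨l, hl, hwl.ne'⟩, hcentre, fun u hu v hv huv => ?_⟩
  by_contra! h
  exact hno_edge u hu v hv h.1 h.2 huv

lemma isStarOn_univ_of_residualVertices_eq_empty (hcard : 3 ≤ Fintype.card V)
    (hadj : ∀ v, ∃ u, G.Adj v u)
    (hdom : G.SupportVerticesDominateEdges)
    (hres : G.residualVertices = ∅) (hP : ¬ IsRestrainedDominatingSet G G.pendantVertices) :
    IsStarOn G univ := by
  have hsupp : ∀ v ∉ G.pendantVertices, v ∈ G.supportVertices := fun v hv =>
    by_contra fun hvs => by simpa [hres] using mem_residualVertices.2 ⟨hv, hvs⟩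
  have hsupp_ne : ∀ s ∈ G.supportVertices, s ∉ G.pendantVertices := fun s hs =>
    notMem_pendantVertices_of_mem_supportVertices hcard hadj hdom hs
  obtain ⟨v⟩ : Nonempty V := Fintype.card_pos_iff.1 (by omega)
  obtain ⟨a, ha⟩ : ∃ a, a ∈ G.supportVertices := by
    by_cases hv : v ∈ G.pendantVertices
    · obtain ⟨u, hvu⟩ := hadj v
      exact ⟨u, mem_supportVertices.2 ⟨v, hv, hvu.symm⟩⟩
    · exact ⟨v, hsupp v hv⟩
  have honly : ∀ s ∈ G.supportVertices, s = a := by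
    by_contra! ⟨b, hb, hba⟩
    refine hP ⟨fun v hv => mem_supportVertices.1 (hsupp v hv), fun v hv => ?_⟩
    by_cases hva : v = a
    · subst hva
      exact ⟨b, hsupp_ne b hb, adj_of_mem_supportVertices hdom (hsupp v hv) hb hba.symm⟩
    · exact ⟨a, hsupp_ne a ha, adj_of_mem_supportVertices hdom (hsupp v hv) ha hva⟩
  have hleaf : ∀ v ≠ a, v ∈ G.pendantVertices := fun v hva =>
    by_contra fun hv => hva (honly v (hsupp v hv))
  have hcentre : ∀ v ≠ a, G.Adj a v := by
    intro v hva
    obtain ⟨u, hvu⟩ := hadj v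
    obtain rfl := honly u (mem_supportVertices.2 ⟨v, hleaf v hva, hvu.symm⟩)
    exact hvu.symm
  obtain ⟨u, hau⟩ := hadj a
  refine ⟨a, mem_univ a, ⟨u, mem_univ u, hau.ne'⟩, fun v _ hva => hcentre v hva,
    fun u _ v _ huv => ?_⟩
  by_contra! h
  exact not_adj_of_mem_pendantVertices hcard hadj hdom (hleaf u h.1) (hleaf v h.2) huv

lemma exists_insert_pendantVertices_of_isStarOn_univ (hcard : 3 ≤ Fintype.card V)
    (hadj : ∀ v, ∃ u, G.Adj v u)
    (hdom : G.SupportVerticesDominateEdges)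
    (h : IsStarOn G univ) :
    ¬ IsRestrainedDominatingSet G G.pendantVertices ∧
      ∃ w ∉ G.pendantVertices, IsRestrainedDominatingSet G (insert w G.pendantVertices) := by
  obtain ⟨c, -, ⟨l, -, hlc⟩, hc, hedge⟩ := h
  have hleaf : ∀ v ≠ c, v ∈ G.pendantVertices := fun v hvc =>
    mem_pendantVertices.2 (degree_eq_one_iff_existsUnique_adj.2 ⟨c, (hc v (mem_univ v) hvc).symm,
      fun u hvu => (hedge v (mem_univ v) u (mem_univ u) hvu).resolve_left hvc⟩)
  have hcP : c ∉ G.pendantVertices := fun hcP =>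
    not_adj_of_mem_pendantVertices hcard hadj hdom hcP (hleaf l hlc) (hc l (mem_univ l) hlc)
  have hins : insert c G.pendantVertices = univ := eq_univ_of_forall fun v => by
    by_cases hvc : v = c
    · rw [hvc]; exact mem_insert_self c _
    · exact mem_insert_of_mem (hleaf v hvc)
  refine ⟨fun hD => ?_, c, hcP, hins ▸ isRestrainedDominatingSet_univ G⟩
  obtain ⟨u, huP, hcu⟩ := hD.2 c hcP
  exact huP (hleaf u hcu.ne')

lemma exists_insert_pendantVertices_of_isStarOn_residualVertices
    (hdom : G.SupportVerticesDominateEdges)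
    (h : IsStarOn G G.residualVertices) :
    ¬ IsRestrainedDominatingSet G G.pendantVertices ∧
      ∃ w ∉ G.pendantVertices, IsRestrainedDominatingSet G (insert w G.pendantVertices) := by
  obtain ⟨c, hcR, ⟨l, hlR, hlc⟩, hc, -⟩ := h
  have hout : ∀ u ∉ G.pendantVertices, u ≠ c → u ∉ insert c G.pendantVertices := by
    intro u huP huc
    simp [huP, huc]
  have hcl := hc l hlR hlc
  rw [mem_residualVertices] at hcR hlR
  refine ⟨fun hD => ?_, c, hcR.1, fun v hv => ?_, fun v hv => ?_⟩
  · obtain ⟨u, hu, hcu⟩ := hD.1 c hcR.1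
    exact notMem_pendantVertices_of_adj hcR.2 hcu hu
  all_goals
    obtain ⟨hvc, hvP⟩ : v ≠ c ∧ v ∉ G.pendantVertices := by simpa using hv
  · by_cases hvs : v ∈ G.supportVertices
    · obtain ⟨q, hq, hvq⟩ := mem_supportVertices.1 hvs
      exact ⟨q, mem_insert_of_mem hq, hvq⟩
    · exact ⟨c, mem_insert_self c _, (hc v (mem_residualVertices.2 ⟨hvP, hvs⟩) hvc).symm⟩
  · by_cases hvs : v ∈ G.supportVertices
    · obtain ⟨u, huc, hlu⟩ := exists_adj_ne_of_notMem_pendantVertices hlR.1 hcl.symm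
      rcases hdom v hvs l u hlu with hvl | hvu
      · exact ⟨l, hout l hlR.1 hlc, hvl⟩
      · exact ⟨u, hout u (notMem_pendantVertices_of_adj hlR.2 hlu) huc, hvu⟩
    · have hvR := mem_residualVertices.2 ⟨hvP, hvs⟩
      obtain ⟨a, hac, hva⟩ := exists_adj_ne_of_notMem_pendantVertices hvP (hc v hvR hvc).symm
      exact ⟨a, hout a (notMem_pendantVertices_of_adj hvs hva) hac, hva⟩

theorem restrainedDominationNumber_eq_card_pendantVertices_add_one_iff
    (hcard : 3 ≤ Fintype.card V) (htri : G.CliqueFree 3) (hadj : ∀ v, ∃ u, G.Adj v u)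
    (hdom : G.SupportVerticesDominateEdges) :
    restrainedDominationNumber G = #G.pendantVertices + 1 ↔
      IsStarOn G univ ∨ IsStarOn G G.residualVertices := by
  rw [restrainedDominationNumber_eq_card_add_one_iff fun _ hD => hD.pendantVertices_subset]
  constructor
  · rintro ⟨hP, w, hw, hD⟩
    obtain hres | hres := G.residualVertices.eq_empty_or_nonempty
    · exact .inl (isStarOn_univ_of_residualVertices_eq_empty hcard hadj hdom hres hP)
    · exact .inr
        (isStarOn_residualVertices_of_isRestrainedDominatingSet_insert htri hadj hdom hres hw hD)
  · rintro (h | h)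
    · exact exists_insert_pendantVertices_of_isStarOn_univ hcard hadj hdom h
    · exact exists_insert_pendantVertices_of_isStarOn_residualVertices hdom h

end Residual

lemma supportVerticesDominateEdges_of_chain [DecidableEq V] {X Y : Finset V}
    (hbip : ∀ u v, G.Adj u v → (u ∈ X ∧ v ∈ Y) ∨ (u ∈ Y ∧ v ∈ X))
    {p : ℕ} {x : Fin p → V} (hxim : univ.image x = X)
    (hxchain : ∀ i j : Fin p, i ≤ j → G.neighborSet (x i) ⊆ G.neighborSet (x j)) :
    G.SupportVerticesDominateEdges := by
  intro s hs
  obtain ⟨q, hq, hsq⟩ := mem_supportVertices.1 hs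
  have hX : ∀ v ∈ X, ∃ i, x i = v := fun v hv => by simpa [← hxim] using hv
  suffices key : ∀ j w, G.Adj (x j) w → G.Adj s (x j) ∨ G.Adj s w by
    intro u w huw
    rcases hbip u w huw with ⟨hu, -⟩ | ⟨-, hw⟩
    · obtain ⟨j, rfl⟩ := hX u hu
      exact key j w huw
    · obtain ⟨j, rfl⟩ := hX w hw
      exact (key j u huw.symm).symm
  intro j w hjw
  rcases hbip s q hsq with ⟨hsX, -⟩ | ⟨-, hqX⟩
  · obtain ⟨i, rfl⟩ := hX s hsX
    rcases le_total j i with hji | hij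
    · exact .inr (hxchain j i hji hjw)
    · have hji : x j = x i :=
        eq_of_adj_of_mem_pendantVertices hq (hxchain i j hij hsq).symm hsq.symm
      exact .inr (hji ▸ hjw)
  · obtain ⟨i, rfl⟩ := hX q hqX
    rcases le_total i j with hij | hji
    · exact .inl (hxchain i j hij hsq.symm).symm
    · obtain rfl := eq_of_adj_of_mem_pendantVertices hq (hxchain j i hji hjw) hsq.symm
      exact .inl hjw.symm

end SimpleGraph

theorem stmt_13_general {V : Type*} [Fintype V] [DecidableEq V] (G : SimpleGraph V)
    [DecidableRel G.Adj] (hconn : G.Connected) (hcard : 3 ≤ Fintype.card V)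
    (X Y : Finset V) (hdisj : Disjoint X Y)
    (hbip : ∀ u v, G.Adj u v → (u ∈ X ∧ v ∈ Y) ∨ (u ∈ Y ∧ v ∈ X))
    (p : ℕ) (x : Fin p → V)
    (hxim : Finset.univ.image x = X)
    (hxchain : ∀ i j : Fin p, i ≤ j → G.neighborSet (x i) ⊆ G.neighborSet (x j))
    (P : Finset V) (hP : P = Finset.univ.filter (fun v => G.degree v = 1))
    (t : ℕ) (ht : t = P.card)
    (PA : Finset V) (hPA : PA = Finset.univ.filter (fun v => ∃ u ∈ P, G.Adj v u)) :
    restrainedDominationNumber G = t + 1 ↔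
      (IsStarOn G Finset.univ ∨ IsStarOn G (Finset.univ \ (P ∪ PA))) := by
  subst hP ht hPA
  have : Nontrivial V := Fintype.one_lt_card_iff_nontrivial.1 (by omega)
  exact SimpleGraph.restrainedDominationNumber_eq_card_pendantVertices_add_one_iff hcard
    (cliqueFree_three_of_bipartite hdisj hbip) hconn.preconnected.exists_adj_of_nontrivial
    (SimpleGraph.supportVerticesDominateEdges_of_chain hbip hxim hxchain)

/-- For a connected chain graph `G` with at least three vertices, `t` pendant vertices
forming the set `P`, and `P_A` the set of vertices adjacent to a vertex of `P`:
`γ_r(G) = t + 1` iff either `G` is a star or `G[(X ∪ Y) \ (P ∪ P_A)]` is a star. -/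
theorem stmt_13 {V : Type*} [Fintype V] [DecidableEq V] (G : SimpleGraph V)
    [DecidableRel G.Adj] (hconn : G.Connected) (hcard : 3 ≤ Fintype.card V)
    (X Y : Finset V) (hdisj : Disjoint X Y) (hunion : X ∪ Y = Finset.univ)
    (hbip : ∀ u v, G.Adj u v → (u ∈ X ∧ v ∈ Y) ∨ (u ∈ Y ∧ v ∈ X))
    (p : ℕ) (x : Fin p → V) (hxinj : Function.Injective x)
    (hxim : Finset.univ.image x = X)
    (hxchain : ∀ i j : Fin p, i ≤ j → G.neighborSet (x i) ⊆ G.neighborSet (x j))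
    (P : Finset V) (hP : P = Finset.univ.filter (fun v => G.degree v = 1))
    (t : ℕ) (ht : t = P.card)
    (PA : Finset V) (hPA : PA = Finset.univ.filter (fun v => ∃ u ∈ P, G.Adj v u)) :
    restrainedDominationNumber G = t + 1 ↔
      (IsStarOn G Finset.univ ∨ IsStarOn G (Finset.univ \ (P ∪ PA))) :=
  stmt_13_general G hconn hcard X Y hdisj hbip p x hxim hxchain P hP t ht PA hPA
end

section
/- Let G = (X,Y,E) be a connected chain graph having at least three vertices with chain ordering (x_1,…,x_p,y_1,…,y_q), and let P denote the set of all pendant vertices of G. Then P ∪ {x_p, y_1} is a restrained dominating set of G. -/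
/-- For a connected chain graph `G` with at least three vertices and chain ordering
`(x_1,…,x_p,y_1,…,y_q)`, if `P` is the set of pendant vertices of `G`, then
`P ∪ {x_p, y_1}` is a restrained dominating set of `G`. -/
theorem stmt_14 {V : Type*} [Fintype V] [DecidableEq V] (G : SimpleGraph V)
    [DecidableRel G.Adj] (hconn : G.Connected) (hcard : 3 ≤ Fintype.card V)
    (X Y : Finset V) (hdisj : Disjoint X Y) (hunion : X ∪ Y = Finset.univ)
    (hbip : ∀ u v, G.Adj u v → (u ∈ X ∧ v ∈ Y) ∨ (u ∈ Y ∧ v ∈ X))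
    (p q : ℕ) (hp : 0 < p) (hq : 0 < q)
    (x : Fin p → V) (hxinj : Function.Injective x) (hxim : Finset.univ.image x = X)
    (hxchain : ∀ i j : Fin p, i ≤ j → G.neighborSet (x i) ⊆ G.neighborSet (x j))
    (y : Fin q → V) (hyinj : Function.Injective y) (hyim : Finset.univ.image y = Y)
    (hychain : ∀ i j : Fin q, i ≤ j → G.neighborSet (y j) ⊆ G.neighborSet (y i))
    (P : Finset V) (hP : P = Finset.univ.filter (fun v => G.degree v = 1)) :
    IsRestrainedDominatingSet G (P ∪ {x ⟨p - 1, by omega⟩, y ⟨0, hq⟩}) := by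
  classical
  set xp := x ⟨p - 1, by omega⟩ with hxp
  set y0 := y ⟨0, hq⟩ with hy0
  set D := P ∪ {xp, y0} with hD
  have hxpD : xp ∈ D := Finset.mem_union_right _ (by simp)
  have hy0D : y0 ∈ D := Finset.mem_union_right _ (by simp)
  have hxmem : ∀ i, x i ∈ X := fun i => hxim ▸ Finset.mem_image_of_mem x (Finset.mem_univ i)
  have hymem : ∀ i, y i ∈ Y := fun i => hyim ▸ Finset.mem_image_of_mem y (Finset.mem_univ i)
  have hXY : ∀ v : V, v ∈ X ∨ v ∈ Y := fun v => by
    have : v ∈ X ∪ Y := hunion ▸ Finset.mem_univ v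
    exact Finset.mem_union.mp this
  have hne : ∀ v : V, ∃ u, G.Adj v u := by
    intro v
    obtain ⟨u, hu⟩ := Fintype.exists_ne_of_one_lt_card (by omega) v
    obtain ⟨w⟩ := hconn v u
    cases w with
    | nil => exact absurd rfl hu.symm
    | cons h _ => exact ⟨_, h⟩
  have hnotXY : ∀ v, v ∈ X → v ∈ Y → False := by
    intro v hvX hvY
    exact Finset.disjoint_left.mp hdisj hvX hvY
  -- xp is adjacent to every vertex of Y
  have hYadj : ∀ w ∈ Y, G.Adj xp w := by
    intro w hw
    obtain ⟨u, hu⟩ := hne w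
    have huX : u ∈ X := by
      rcases hbip w u hu with ⟨h1, _⟩ | ⟨_, h2⟩
      · exact absurd h1 (fun h => hnotXY w h hw)
      · exact h2
    rw [← hxim] at huX
    obtain ⟨i, _, hi⟩ := Finset.mem_image.mp huX
    have := hxchain i ⟨p - 1, by omega⟩ (by exact Fin.mk_le_mk.mpr (by omega)) (by
      show w ∈ G.neighborSet (x i); rw [hi]; exact hu.symm)
    exact this
  -- y0 is adjacent to every vertex of X
  have hXadj : ∀ w ∈ X, G.Adj y0 w := by
    intro w hw
    obtain ⟨u, hu⟩ := hne w
    have huY : u ∈ Y := by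
      rcases hbip w u hu with ⟨_, h1⟩ | ⟨h2, _⟩
      · exact h1
      · exact absurd h2 (fun h => hnotXY w hw h)
    rw [← hyim] at huY
    obtain ⟨j, _, hj⟩ := Finset.mem_image.mp huY
    have := hychain ⟨0, hq⟩ j (by exact Fin.mk_le_mk.mpr (by omega)) (by
      show w ∈ G.neighborSet (y j); rw [hj]; exact hu.symm)
    exact this
  constructor
  · intro v hv
    rcases hXY v with hvX | hvY
    · exact ⟨y0, hy0D, (hXadj v hvX).symm⟩
    · exact ⟨xp, hxpD, (hYadj v hvY).symm⟩
  · intro v hv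
    by_contra hcon
    push_neg at hcon
    -- every neighbor of v is in D
    have hall : ∀ u, G.Adj v u → u ∈ D := by
      intro u hu
      by_contra h
      exact hcon u h hu
    -- degree of v ≥ 2
    have hvP : v ∉ P := fun h => hv (Finset.mem_union_left _ h)
    have hdeg1 : G.degree v ≠ 1 := by
      intro h
      exact hvP (hP ▸ Finset.mem_filter.mpr ⟨Finset.mem_univ v, h⟩)
    have hdegpos : 0 < G.degree v := by
      obtain ⟨u, hu⟩ := hne v
      exact G.degree_pos_iff_exists_adj v |>.mpr ⟨u, hu⟩
    have hdeg2 : 1 < (G.neighborFinset v).card := by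
      have : (G.neighborFinset v).card = G.degree v := rfl
      omega
    obtain ⟨u1, hu1, u2, hu2, hu12⟩ := Finset.one_lt_card.mp hdeg2
    rw [SimpleGraph.mem_neighborFinset] at hu1 hu2
    have hvne : v ≠ xp := fun h => hv (h ▸ hxpD)
    have hvne' : v ≠ y0 := fun h => hv (h ▸ hy0D)
    -- pendant neighbor gives contradiction
    have key : ∀ w, G.Adj v w → w ∈ P → False := by
      intro w hw hwP
      have hdw : G.degree w = 1 := by rw [hP] at hwP; exact (Finset.mem_filter.mp hwP).2
      have hle : (G.neighborFinset w).card ≤ 1 := le_of_eq hdw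
      rcases hXY w with hwX | hwY
      · have h1 : v ∈ G.neighborFinset w := (SimpleGraph.mem_neighborFinset _ _ _).mpr hw.symm
        have h2 : y0 ∈ G.neighborFinset w := (SimpleGraph.mem_neighborFinset _ _ _).mpr
          ((hXadj w hwX).symm)
        exact hvne' (Finset.card_le_one.mp hle _ h1 _ h2)
      · have h1 : v ∈ G.neighborFinset w := (SimpleGraph.mem_neighborFinset _ _ _).mpr hw.symm
        have h2 : xp ∈ G.neighborFinset w := (SimpleGraph.mem_neighborFinset _ _ _).mpr
          ((hYadj w hwY).symm)
        exact hvne (Finset.card_le_one.mp hle _ h1 _ h2)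
    -- u1, u2 ∈ D; since u1 ≠ u2 at least one is in P or both...
    have hmem : ∀ u, G.Adj v u → u ∈ P ∨ u = xp ∨ u = y0 := by
      intro u hu
      have := hall u hu
      rw [hD, Finset.mem_union, Finset.mem_insert, Finset.mem_singleton] at this
      tauto
    -- u cannot be both xp and y0 simultaneously; also u in X or Y restricts
    rcases hXY v with hvX | hvY
    · -- neighbors of v are in Y, so ≠ xp
      have hYside : ∀ u, G.Adj v u → u ≠ xp := by
        intro u hu h
        have huY : u ∈ Y := by
          rcases hbip v u hu with ⟨_, h1⟩ | ⟨h2, _⟩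
          · exact h1
          · exact absurd h2 (fun hh => hnotXY v hvX hh)
        exact hnotXY u (h ▸ hxmem _) huY
      rcases hmem u1 hu1 with h | h | h
      · exact key u1 hu1 h
      · exact hYside u1 hu1 h
      · rcases hmem u2 hu2 with h' | h' | h'
        · exact key u2 hu2 h'
        · exact hYside u2 hu2 h'
        · exact hu12 (h.trans h'.symm)
    · have hXside : ∀ u, G.Adj v u → u ≠ y0 := by
        intro u hu h
        have huX : u ∈ X := by
          rcases hbip v u hu with ⟨h1, _⟩ | ⟨_, h2⟩
          · exact absurd h1 (fun hh => hnotXY v hh hvY)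
          · exact h2
        exact hnotXY u huX (h ▸ hymem _)
      rcases hmem u1 hu1 with h | h | h
      · exact key u1 hu1 h
      · rcases hmem u2 hu2 with h' | h' | h'
        · exact key u2 hu2 h'
        · exact hu12 (h.trans h'.symm)
        · exact hXside u2 hu2 h'
      · exact hXside u1 hu1 h
end
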